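/- arXiv:2301.05630 — 2 statements merged into one kernel-verified Lean document; each statement's English description precedes it below -/
import Mathlib

section
/- For every integer τ ≥ 1, the weighted sum of inverse square roots satisfies the upper bound Σ_{i=1}^{τ} α_τ^i / √i ≤ 2/√τ. -/
open Finset

/-- The learning rate `α_τ = (H+1)/(H+τ)`. -/
noncomputable def lr (H : ℝ) (τ : ℕ) : ℝ := (H + 1) / (H + τ)

/-- The coefficients `α_τ^i`. -/
noncomputable def acoef (H : ℝ) (τ i : ℕ) : ℝ :=
  if i = 0 then ∏ j ∈ Finset.Icc 1 τ, (1 - lr H j)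
  else lr H i * ∏ j ∈ Finset.Icc (i + 1) τ, (1 - lr H j)

/-! The coefficients satisfy `α_{n+1}^i = (1 - α_{n+1}) α_n^i` for `i ≤ n` and `α_{n+1}^{n+1} = α_{n+1}`,
so `S_τ = ∑_{i=1}^τ α_τ^i / √i` obeys `S_{n+1} = (1 - α_{n+1}) S_n + α_{n+1} / √(n+1)`.
The bound `2/√τ` is preserved by this recursion because `2√n √(n+1) ≤ 2n + 1` (AM–GM)
and `H ≥ 0`. The induction can start at `τ = 0`, where both sides vanish (`2 / √0 = 0` in Lean). -/

lemma lr_le_one {H : ℝ} (hH : -1 < H) {τ : ℕ} (hτ : 1 ≤ τ) : lr H τ ≤ 1 := by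
  have : (1 : ℝ) ≤ τ := by exact_mod_cast hτ
  exact div_le_one_of_le₀ (by linarith) (by linarith)

lemma acoef_succ (H : ℝ) {n i : ℕ} (hi : i ≤ n) :
    acoef H (n + 1) i = (1 - lr H (n + 1)) * acoef H n i := by
  unfold acoef
  split_ifs
  · rw [prod_Icc_succ_top (by omega), mul_comm]
  · rw [prod_Icc_succ_top (by omega)]
    ring

lemma acoef_self_succ (H : ℝ) (n : ℕ) : acoef H (n + 1) (n + 1) = lr H (n + 1) := by
  simp [acoef]

lemma sum_acoef_mul_succ (H : ℝ) (f : ℕ → ℝ) (n : ℕ) :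
    ∑ i ∈ Icc 1 (n + 1), acoef H (n + 1) i * f i
      = (1 - lr H (n + 1)) * ∑ i ∈ Icc 1 n, acoef H n i * f i + lr H (n + 1) * f (n + 1) := by
  rw [sum_Icc_succ_top (by omega), acoef_self_succ, mul_sum]
  congr 1
  refine sum_congr rfl fun i hi => ?_
  rw [acoef_succ H (mem_Icc.mp hi).2, mul_assoc]

lemma two_mul_sqrt_mul_sqrt_succ_le {x : ℝ} (hx : 0 ≤ x) : 2 * √x * √(x + 1) ≤ 2 * x + 1 := by
  have := two_mul_le_add_sq √x √(x + 1)
  rwa [Real.sq_sqrt hx, Real.sq_sqrt (by linarith), ← add_assoc, ← two_mul] at this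

lemma lr_step_le {H : ℝ} (hH : 0 ≤ H) (n : ℕ) :
    (1 - lr H (n + 1)) * (2 / √n) + lr H (n + 1) / √(n + 1) ≤ 2 / √(n + 1) := by
  have hc : 0 < H + n + 1 := by positivity
  have hs : 0 < √((n : ℝ) + 1) := Real.sqrt_pos.mpr (by positivity)
  have hlr : lr H (n + 1) = (H + 1) / (H + n + 1) := by
    rw [lr, Nat.cast_succ, add_assoc]
  have hfirst : (1 - lr H (n + 1)) * (2 / √n) = 2 * √n / (H + n + 1) := by
    rw [hlr, one_sub_div hc.ne', show H + n + 1 - (H + 1) = n by ring]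
    calc (n : ℝ) / (H + n + 1) * (2 / √n) = 2 * (n / √n) / (H + n + 1) := by ring
      _ = 2 * √n / (H + n + 1) := by rw [Real.div_sqrt]
  rw [hfirst, hlr, div_div,
    show 2 * √n / (H + n + 1) + (H + 1) / ((H + n + 1) * √(n + 1))
      = (2 * √n * √(n + 1) + (H + 1)) / ((H + n + 1) * √(n + 1)) by field_simp,
    show 2 / √(n + 1) = 2 * (H + n + 1) / ((H + n + 1) * √(n + 1)) by field_simp]
  gcongr
  linarith [two_mul_sqrt_mul_sqrt_succ_le (Nat.cast_nonneg (α := ℝ) n)]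

theorem stmt_1_general (H : ℝ) (hH : 1 ≤ H) (τ : ℕ) :
    ∑ i ∈ Finset.Icc 1 τ, acoef H τ i / Real.sqrt i ≤ 2 / Real.sqrt τ := by
  induction τ with
  | zero => simp
  | succ n ih =>
    have hα : 0 ≤ 1 - lr H (n + 1) := sub_nonneg.mpr (lr_le_one (by linarith) (by omega))
    simp only [div_eq_mul_inv] at ih ⊢
    calc ∑ i ∈ Icc 1 (n + 1), acoef H (n + 1) i * (√i)⁻¹
        = (1 - lr H (n + 1)) * ∑ i ∈ Icc 1 n, acoef H n i * (√i)⁻¹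
            + lr H (n + 1) * (√(n + 1 : ℕ))⁻¹ := sum_acoef_mul_succ H (fun i => (√i)⁻¹) n
      _ ≤ (1 - lr H (n + 1)) * (2 * (√n)⁻¹) + lr H (n + 1) * (√(n + 1 : ℕ))⁻¹ := by gcongr
      _ ≤ 2 * (√(n + 1 : ℕ))⁻¹ := by
        simpa only [div_eq_mul_inv, Nat.cast_succ] using lr_step_le (by linarith) n

theorem stmt_1 (H : ℝ) (hH : 1 ≤ H) (τ : ℕ) (hτ : 1 ≤ τ) :
    ∑ i ∈ Finset.Icc 1 τ, acoef H τ i / Real.sqrt i ≤ 2 / Real.sqrt τ :=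
  stmt_1_general H hH τ
end

section
/- For every integer i ≥ 1 and every integer N ≥ i, the partial sums over the first index satisfy Σ_{τ=i}^{N} α_τ^i ≤ 1 + 1/H; consequently the series Σ_{τ=i}^{∞} α_τ^i (of nonnegative terms) converges with sum at most 1 + 1/H. -/
open Finset

lemma Hn_pos (H : ℝ) (hH : 1 ≤ H) (n : ℕ) : 0 < H + n := by
  have : (0:ℝ) ≤ n := Nat.cast_nonneg n
  linarith

lemma factor_nonneg (H : ℝ) (hH : 1 ≤ H) {j : ℕ} (hj : 2 ≤ j) : 0 ≤ 1 - lr H j := by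
  have hpos := Hn_pos H hH j
  have h2 : (2:ℝ) ≤ j := by exact_mod_cast hj
  rw [lr, sub_nonneg, div_le_one hpos]
  linarith

lemma prod_nonneg' (H : ℝ) (hH : 1 ≤ H) (i τ : ℕ) (hi : 1 ≤ i) :
    0 ≤ ∏ j ∈ Finset.Icc (i + 1) τ, (1 - lr H j) := by
  apply Finset.prod_nonneg
  intro j hj
  have := (Finset.mem_Icc.mp hj).1
  exact factor_nonneg H hH (by omega)

lemma acoef_nonneg (H : ℝ) (hH : 1 ≤ H) (τ i : ℕ) (hi : 1 ≤ i) : 0 ≤ acoef H τ i := by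
  rw [acoef, if_neg (by omega)]
  have hpos := Hn_pos H hH i
  have : 0 ≤ lr H i := div_nonneg (by linarith) (le_of_lt hpos)
  exact mul_nonneg this (prod_nonneg' H hH i τ hi)

lemma key_id (H : ℝ) (hH : 1 ≤ H) (i : ℕ) (hi : 1 ≤ i) :
    ∀ N : ℕ, i ≤ N → ∑ τ ∈ Finset.Icc i N, acoef H τ i =
      (1 + 1/H) * (1 - (H + (N+1 : ℕ))/(H + i) * ∏ j ∈ Finset.Icc (i + 1) (N+1), (1 - lr H j)) := by
  have hH0 : (0:ℝ) < H := by linarith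
  have hi0 := Hn_pos H hH i
  intro N hN
  induction N, hN using Nat.le_induction with
  | base =>
      rw [Finset.Icc_self, Finset.sum_singleton, acoef, if_neg (by omega),
        Finset.Icc_self, Finset.prod_singleton,
        Finset.Icc_eq_empty (by omega), Finset.prod_empty]
      have hi1 := Hn_pos H hH (i+1)
      rw [lr, lr]
      push_cast
      push_cast at hi1
      field_simp
      ring
  | succ N hN ih =>
      have h1 : i ≤ N + 1 := by omega
      rw [Finset.sum_Icc_succ_top h1, ih, acoef, if_neg (by omega),
        Finset.prod_Icc_succ_top (show i + 1 ≤ N + 2 by omega)]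
      have hN1 := Hn_pos H hH (N+1)
      have hN2 := Hn_pos H hH (N+2)
      push_cast at hN1 hN2 ⊢
      rw [lr, lr]
      push_cast
      field_simp
      ring

lemma partial_le (H : ℝ) (hH : 1 ≤ H) (i : ℕ) (hi : 1 ≤ i) :
    ∀ N : ℕ, i ≤ N → ∑ τ ∈ Finset.Icc i N, acoef H τ i ≤ 1 + 1 / H := by
  intro N hN
  rw [key_id H hH i hi N hN]
  have hH0 : (0:ℝ) < H := by linarith
  have h1 : (0:ℝ) < 1 + 1/H := by positivity
  have h2 : 0 ≤ (H + ((N:ℝ)+1))/(H + i) * ∏ j ∈ Finset.Icc (i + 1) (N+1), (1 - lr H j) := by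
    apply mul_nonneg
    · exact div_nonneg (by have := Hn_pos H hH (N+1); push_cast at this ⊢; linarith)
        (le_of_lt (Hn_pos H hH i))
    · exact prod_nonneg' H hH i (N+1) hi
  push_cast at h2 ⊢
  nlinarith

theorem stmt_3 (H : ℝ) (hH : 1 ≤ H) (i : ℕ) (hi : 1 ≤ i) :
    (∀ N : ℕ, i ≤ N → ∑ τ ∈ Finset.Icc i N, acoef H τ i ≤ 1 + 1 / H) ∧
    Summable (fun n : ℕ => acoef H (i + n) i) ∧
    ∑' n : ℕ, acoef H (i + n) i ≤ 1 + 1 / H := by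
  have hH0 : (0:ℝ) < H := by linarith
  have hrange : ∀ n : ℕ, ∑ k ∈ Finset.range n, acoef H (i + k) i ≤ 1 + 1 / H := by
    intro n
    cases n with
    | zero => simp; positivity
    | succ m =>
        have : ∑ k ∈ Finset.range (m+1), acoef H (i + k) i
            = ∑ τ ∈ Finset.Ico i (i + (m+1)), acoef H τ i := by
          rw [Finset.sum_Ico_eq_sum_range]
          simp
        rw [this, show i + (m+1) = (i + m) + 1 by ring, Finset.Ico_add_one_right_eq_Icc]
        exact partial_le H hH i hi (i + m) (by omega)
  have hnn : ∀ n : ℕ, 0 ≤ acoef H (i + n) i := fun n => acoef_nonneg H hH (i + n) i hi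
  refine ⟨partial_le H hH i hi, ?_, ?_⟩
  · exact summable_of_sum_range_le hnn hrange
  · exact Summable.tsum_le_of_sum_range_le (summable_of_sum_range_le hnn hrange) hrange
end
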